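/- arXiv:1802.01809 — 4 statements merged into one kernel-verified Lean document; each statement's English description precedes it below -/
import Mathlib

section
/- In the group algebra (ℤ/2ℤ)[S₃], the elements c₁ = 1 + s₁₂ + s₂₁, c₂ = 1 + s₂ + s₂₁ + s₁₂₁, and c₃ = 1 + s₂ + s₁₂ + s₁₂₁ form a set of mutually orthogonal idempotents summing to 1. -/
namespace Stmt0

noncomputable section

abbrev k := ZMod 2
abbrev S₃ := Equiv.Perm (Fin 3)

/-- The group algebra `(ℤ/2ℤ)[S₃]`. -/
abbrev A := MonoidAlgebra k S₃

/-- The simple transposition `s₁ = (0 1)` as an element of the group algebra. -/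
def s₁ : A := MonoidAlgebra.of k S₃ (Equiv.swap 0 1)

/-- The simple transposition `s₂ = (1 2)` as an element of the group algebra. -/
def s₂ : A := MonoidAlgebra.of k S₃ (Equiv.swap 1 2)

def c₁ : A := 1 + s₁ * s₂ + s₂ * s₁
def c₂ : A := 1 + s₂ + s₂ * s₁ + s₁ * s₂ * s₁
def c₃ : A := 1 + s₂ + s₁ * s₂ + s₁ * s₂ * s₁

lemma h1 : s₁ * s₁ = 1 := by
  rw [s₁, ← map_mul]
  have : Equiv.swap (0:Fin 3) 1 * Equiv.swap 0 1 = 1 := by decide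
  rw [this, map_one]

lemma h2 : s₂ * s₂ = 1 := by
  rw [s₂, ← map_mul]
  have : Equiv.swap (1:Fin 3) 2 * Equiv.swap 1 2 = 1 := by decide
  rw [this, map_one]

lemma hb : s₂ * (s₁ * s₂) = s₁ * (s₂ * s₁) := by
  rw [s₁, s₂, ← map_mul, ← map_mul, ← map_mul, ← map_mul]
  congr 1
  decide

lemma h1' (x : A) : s₁ * (s₁ * x) = x := by rw [← mul_assoc, h1, one_mul]
lemma h2' (x : A) : s₂ * (s₂ * x) = x := by rw [← mul_assoc, h2, one_mul]
lemma hb' (x : A) : s₂ * (s₁ * (s₂ * x)) = s₁ * (s₂ * (s₁ * x)) := by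
  rw [← mul_assoc s₁ s₂ x, ← mul_assoc s₂ _ x, hb]; simp [mul_assoc]

lemma two' (x : A) : x + x = 0 := by
  rw [← two_smul k x, show (2:k) = 0 by decide, zero_smul]

lemma twosmul (x : A) : (2:ℤ) • x = 0 := by
  rw [two_zsmul, two' x]

lemma threesmul (x : A) : (3:ℤ) • x = x := by
  show ((2:ℤ) + 1) • x = x
  rw [add_smul, twosmul, one_smul, zero_add]

lemma foursmul (x : A) : (4:ℤ) • x = 0 := by
  show ((2:ℤ) + 2) • x = 0
  rw [add_smul, twosmul, zero_add]

lemma twosmuln (x : A) : 2 • x = 0 := by rw [two_smul, two' x]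
lemma threesmuln (x : A) : 3 • x = x := by
  show ((2:ℕ) + 1) • x = x
  rw [add_nsmul, twosmuln, one_nsmul, zero_add]
lemma foursmuln (x : A) : 4 • x = 0 := by
  show ((2:ℕ) + 2) • x = 0
  rw [add_nsmul, twosmuln, zero_add]

/-- `c₁, c₂, c₃` form a set of mutually orthogonal idempotents summing to `1`
in `(ℤ/2ℤ)[S₃]`. -/
theorem mutually_orthogonal_idempotents :
    (c₁ * c₁ = c₁ ∧ c₂ * c₂ = c₂ ∧ c₃ * c₃ = c₃) ∧
    (c₁ * c₂ = 0 ∧ c₂ * c₁ = 0 ∧ c₁ * c₃ = 0 ∧ c₃ * c₁ = 0 ∧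
      c₂ * c₃ = 0 ∧ c₃ * c₂ = 0) ∧
    c₁ + c₂ + c₃ = 1 := by
  refine ⟨⟨?_, ?_, ?_⟩, ⟨?_, ?_, ?_, ?_, ?_, ?_⟩, ?_⟩ <;>
  · simp only [c₁, c₂, c₃, mul_add, add_mul, one_mul, mul_one, mul_assoc, h1, h2, h1', h2', hb, hb']
    abel_nf
    simp only [twosmul, threesmul, foursmul, twosmuln, threesmuln, foursmuln, zero_add, add_zero]
    try abel

end

end Stmt0
end

section
/- Let P = MvPolynomial (Fin 4) ℤ with variables x₁, x₂, x₃, x₄, let I be the ideal generated by the elementary symmetric polynomials e₁, e₂, e₃, e₄, and let R = P ⧸ I. Then the classes of the 24 monomials x₁^a·x₂^b·x₃^c with 0 ≤ a ≤ 3, 0 ≤ b ≤ 2, 0 ≤ c ≤ 1 form a basis of R as a ℤ-module; in particular R is a free ℤ-module of rank 24 (this realizes the integral cohomology of the flag manifold SU(4)/T³, whose rank equals the order of the Weyl group S₄). -/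
/-!
Adjoining the roots one at a time identifies `R` with the tower
`ℤ[t₁]/(t₁⁴)`, then `[t₂]/(h₃(t₁, t₂))`, then `[t₃]/(h₂(t₁, t₂, t₃))`, where `hₖ` is the
complete homogeneous symmetric polynomial of degree `k` and `x₄ = -(x₁ + x₂ + x₃)`.
The relations `hₖ(x₁, …, xₘ) = 0` for `k = 5 - m` hold in `R`: compare the degree `k`
coefficients of `∏ᵢ₌₁⁴ (1 - xᵢ t) / ∏ᵢ₌₁ᵐ (1 - xᵢ t) = ∏ᵢ₌ₘ₊₁⁴ (1 - xᵢ t)`. Conversely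
`e₁, …, e₄` vanish in the tower. Each step adjoins a root of a monic polynomial, of degree
`4`, `3`, `2`, so the power bases multiply to the basis of monomials `x₁ᵃ x₂ᵇ x₃ᶜ`.
-/

namespace Stmt9

noncomputable section

/-- The polynomial ring `P = ℤ[x₁, x₂, x₃, x₄]`. -/
abbrev P := MvPolynomial (Fin 4) ℤ

def x₁ : P := MvPolynomial.X 0
def x₂ : P := MvPolynomial.X 1
def x₃ : P := MvPolynomial.X 2

/-- The ideal generated by the elementary symmetric polynomials `e₁, e₂, e₃, e₄`. -/
def I : Ideal P := Ideal.span
  {MvPolynomial.esymm (Fin 4) ℤ 1, MvPolynomial.esymm (Fin 4) ℤ 2,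
    MvPolynomial.esymm (Fin 4) ℤ 3, MvPolynomial.esymm (Fin 4) ℤ 4}

/-- The coinvariant algebra of `S₄`, realizing `H^*(SU(4)/T³; ℤ)`. -/
abbrev R := P ⧸ I

section PowerBasis

open Polynomial

variable {S : Type*} [CommRing S] {g : S[X]}

def adjoinRootBasis (hg : g.Monic) {n : ℕ} (hn : g.natDegree = n) :
    Module.Basis (Fin n) S (AdjoinRoot g) :=
  (AdjoinRoot.powerBasis' hg).basis.reindex (finCongr hn)

lemma nontrivial_adjoinRoot [Nontrivial S] (hg : g.Monic) (hdeg : g.natDegree ≠ 0) :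
    Nontrivial (AdjoinRoot g) :=
  Ideal.Quotient.nontrivial_iff.mpr fun h ↦
    hdeg (by rw [hg.eq_one_of_isUnit (Ideal.span_singleton_eq_top.mp h), natDegree_one])

lemma adjoinRootBasis_apply (hg : g.Monic) {n : ℕ} (hn : g.natDegree = n) (i : Fin n) :
    adjoinRootBasis hg hn i = AdjoinRoot.root g ^ (i : ℕ) := by
  rw [adjoinRootBasis, Module.Basis.reindex_apply, PowerBasis.basis_eq_pow]
  rfl

end PowerBasis

section Coinvariants

open MvPolynomial

lemma esymm_one_fin_four : esymm (Fin 4) ℤ 1 = X 0 + X 1 + X 2 + X 3 := by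
  rw [esymm_one, Fin.sum_univ_four]

lemma esymm_two_fin_four : esymm (Fin 4) ℤ 2 =
    X 0 * X 1 + X 0 * X 2 + X 0 * X 3 + X 1 * X 2 + X 1 * X 3 + X 2 * X 3 := by
  simp [esymm_eq_multiset_esymm, Multiset.esymm, Fin.univ_val_map, Multiset.powersetCard_coe,
    List.sublistsLen_succ_cons]
  ring

lemma esymm_three_fin_four : esymm (Fin 4) ℤ 3 =
    X 0 * X 1 * X 2 + X 0 * X 1 * X 3 + X 0 * X 2 * X 3 + X 1 * X 2 * X 3 := by
  simp [esymm_eq_multiset_esymm, Multiset.esymm, Fin.univ_val_map, Multiset.powersetCard_coe,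
    List.sublistsLen_succ_cons]
  ring

lemma esymm_four_fin_four : esymm (Fin 4) ℤ 4 = X 0 * X 1 * X 2 * X 3 := by
  simp [esymm_eq_multiset_esymm, Multiset.esymm, Fin.univ_val_map, Multiset.powersetCard_coe,
    List.sublistsLen_succ_cons]
  ring

/-- `xbar i` is the class of `x_{i+1}`. -/
abbrev xbar (i : Fin 4) : R := Ideal.Quotient.mk I (X i)

lemma mk_esymm_eq_zero {k : ℕ} (hk : k ∈ ({1, 2, 3, 4} : Set ℕ)) :
    Ideal.Quotient.mk I (esymm (Fin 4) ℤ k) = 0 := by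
  rw [Ideal.Quotient.eq_zero_iff_mem]
  apply Ideal.subset_span
  rcases hk with rfl | rfl | rfl | rfl <;> simp

lemma xbar_e₁ : xbar 0 + xbar 1 + xbar 2 + xbar 3 = 0 := by
  simpa only [esymm_one_fin_four, map_add, map_mul] using mk_esymm_eq_zero (k := 1) (by simp)

lemma xbar_e₂ : xbar 0 * xbar 1 + xbar 0 * xbar 2 + xbar 0 * xbar 3 + xbar 1 * xbar 2 +
    xbar 1 * xbar 3 + xbar 2 * xbar 3 = 0 := by
  simpa only [esymm_two_fin_four, map_add, map_mul] using mk_esymm_eq_zero (k := 2) (by simp)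

lemma xbar_e₃ : xbar 0 * xbar 1 * xbar 2 + xbar 0 * xbar 1 * xbar 3 + xbar 0 * xbar 2 * xbar 3 +
    xbar 1 * xbar 2 * xbar 3 = 0 := by
  simpa only [esymm_three_fin_four, map_add, map_mul] using mk_esymm_eq_zero (k := 3) (by simp)

lemma xbar_e₄ : xbar 0 * xbar 1 * xbar 2 * xbar 3 = 0 := by
  simpa only [esymm_four_fin_four, map_add, map_mul] using mk_esymm_eq_zero (k := 4) (by simp)

lemma xbar_h₄ : xbar 0 ^ 4 = 0 := by
  linear_combination xbar 0 ^ 3 * xbar_e₁ - xbar 0 ^ 2 * xbar_e₂ + xbar 0 * xbar_e₃ - xbar_e₄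

lemma xbar_h₃ : xbar 1 ^ 3 + xbar 0 * xbar 1 ^ 2 + xbar 0 ^ 2 * xbar 1 + xbar 0 ^ 3 = 0 := by
  linear_combination (xbar 0 ^ 2 + xbar 0 * xbar 1 + xbar 1 ^ 2) * xbar_e₁
    - (xbar 0 + xbar 1) * xbar_e₂ + xbar_e₃

lemma xbar_h₂ :
    xbar 2 ^ 2 + (xbar 0 + xbar 1) * xbar 2 + (xbar 0 ^ 2 + xbar 0 * xbar 1 + xbar 1 ^ 2) = 0 := by
  linear_combination (xbar 0 + xbar 1 + xbar 2) * xbar_e₁ - xbar_e₂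

end Coinvariants

section Tower

open Polynomial

abbrev A₁ := AdjoinRoot (X ^ 4 : ℤ[X])

def t₁ : A₁ := AdjoinRoot.root _

def f₂ : A₁[X] := X ^ 3 + C t₁ * X ^ 2 + C (t₁ ^ 2) * X + C (t₁ ^ 3)

abbrev A₂ := AdjoinRoot f₂

def f₃ : A₂[X] :=
  X ^ 2 + C (AdjoinRoot.of f₂ t₁ + AdjoinRoot.root f₂) * X +
    C (AdjoinRoot.of f₂ t₁ ^ 2 + AdjoinRoot.of f₂ t₁ * AdjoinRoot.root f₂ + AdjoinRoot.root f₂ ^ 2)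

abbrev A₃ := AdjoinRoot f₃

instance : Nontrivial A₁ := nontrivial_adjoinRoot (monic_X_pow 4) (by simp)

lemma f₂_monic : f₂.Monic := by unfold f₂; monicity!
lemma f₂_natDegree : f₂.natDegree = 3 := by unfold f₂; compute_degree!

instance : Nontrivial A₂ := nontrivial_adjoinRoot f₂_monic (by simp [f₂_natDegree])

lemma f₃_monic : f₃.Monic := by unfold f₃; monicity!
lemma f₃_natDegree : f₃.natDegree = 2 := by unfold f₃; compute_degree!

/-- The images of `x₁, x₂, x₃, x₄`; the last is forced by `e₁ = 0`. -/
def z : Fin 4 → A₃ :=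
  ![AdjoinRoot.of f₃ (AdjoinRoot.of f₂ t₁), AdjoinRoot.of f₃ (AdjoinRoot.root f₂),
    AdjoinRoot.root f₃,
    -(AdjoinRoot.of f₃ (AdjoinRoot.of f₂ t₁) + AdjoinRoot.of f₃ (AdjoinRoot.root f₂) +
      AdjoinRoot.root f₃)]

lemma z_three : z 3 = -(z 0 + z 1 + z 2) := rfl

lemma z_h₄ : z 0 ^ 4 = 0 := by
  have h : AdjoinRoot.mk (X ^ 4 : ℤ[X]) (X ^ 4) = 0 := AdjoinRoot.mk_self
  rw [map_pow, AdjoinRoot.mk_X] at h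
  simp [z, t₁, ← map_pow, h]

lemma z_h₃ : z 1 ^ 3 + z 0 * z 1 ^ 2 + z 0 ^ 2 * z 1 + z 0 ^ 3 = 0 := by
  have h : AdjoinRoot.mk f₂ (X ^ 3 + C t₁ * X ^ 2 + C (t₁ ^ 2) * X + C (t₁ ^ 3)) = 0 :=
    AdjoinRoot.mk_self
  simp only [map_add, map_mul, map_pow, AdjoinRoot.mk_X, AdjoinRoot.mk_C] at h
  simpa [z] using congrArg (AdjoinRoot.of f₃) h

lemma z_h₂ : z 2 ^ 2 + (z 0 + z 1) * z 2 + (z 0 ^ 2 + z 0 * z 1 + z 1 ^ 2) = 0 := by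
  have h : AdjoinRoot.mk f₃ (X ^ 2 + C (AdjoinRoot.of f₂ t₁ + AdjoinRoot.root f₂) * X +
      C (AdjoinRoot.of f₂ t₁ ^ 2 + AdjoinRoot.of f₂ t₁ * AdjoinRoot.root f₂ +
        AdjoinRoot.root f₂ ^ 2)) = 0 :=
    AdjoinRoot.mk_self
  simp only [map_add, map_mul, map_pow, AdjoinRoot.mk_X, AdjoinRoot.mk_C] at h
  simpa [z] using h

end Tower

section Isomorphism

open MvPolynomial

lemma I_le_ker_aeval_z : I ≤ RingHom.ker (aeval z : P →ₐ[ℤ] A₃) := by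
  simp only [I, Ideal.span_le, Set.insert_subset_iff, Set.singleton_subset_iff, SetLike.mem_coe,
    RingHom.mem_ker, esymm_one_fin_four, esymm_two_fin_four, esymm_three_fin_four,
    esymm_four_fin_four, map_add, map_mul, aeval_X, z_three]
  refine ⟨by ring, ?_, ?_, ?_⟩
  · linear_combination -z_h₂
  · linear_combination -(z 0 + z 1) * z_h₂ + z_h₃
  · linear_combination -(z 0 * z 1) * z_h₂ + z 0 * z_h₃ - z_h₄

def toTower : R →ₐ[ℤ] A₃ :=
  Ideal.Quotient.liftₐ I (aeval z) fun _ hp ↦ RingHom.mem_ker.mp (I_le_ker_aeval_z hp)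

lemma toTower_xbar (i : Fin 4) : toTower (xbar i) = z i :=
  aeval_X z i

def ofA₁ : A₁ →+* R := AdjoinRoot.lift (algebraMap ℤ R) (xbar 0) (by simpa using xbar_h₄)

def ofA₂ : A₂ →+* R :=
  AdjoinRoot.lift ofA₁ (xbar 1) (by
    simp only [f₂, Polynomial.eval₂_add, Polynomial.eval₂_mul, Polynomial.eval₂_X_pow,
      Polynomial.eval₂_X, Polynomial.eval₂_C]
    simp only [map_pow, ofA₁, t₁, AdjoinRoot.lift_root]
    exact xbar_h₃)

def ofTower : A₃ →+* R :=
  AdjoinRoot.lift ofA₂ (xbar 2) (by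
    simp only [f₃, Polynomial.eval₂_add, Polynomial.eval₂_mul, Polynomial.eval₂_X_pow,
      Polynomial.eval₂_X, Polynomial.eval₂_C]
    simp only [map_add, map_mul, map_pow, ofA₂, ofA₁, t₁, AdjoinRoot.lift_root,
      AdjoinRoot.lift_of]
    exact xbar_h₂)

lemma ofTower_z (i : Fin 4) : ofTower (z i) = xbar i := by
  have h₀ : ofTower (z 0) = xbar 0 := by simp [z, ofTower, ofA₂, ofA₁, t₁]
  have h₁ : ofTower (z 1) = xbar 1 := by simp [z, ofTower, ofA₂]
  have h₂ : ofTower (z 2) = xbar 2 := by simp [z, ofTower]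
  have h₃ : ofTower (z 3) = xbar 3 := by
    rw [z_three, map_neg, map_add, map_add, h₀, h₁, h₂]
    linear_combination -xbar_e₁
  fin_cases i
  exacts [h₀, h₁, h₂, h₃]

def towerEquiv : R ≃+* A₃ :=
  RingEquiv.ofRingHom toTower ofTower
    (by
      have h (i : Fin 4) : toTower (ofTower (z i)) = z i := by rw [ofTower_z, toTower_xbar]
      ext
      · simp
      exacts [h 0, h 1, h 2])
    (Ideal.Quotient.ringHom_ext (MvPolynomial.ringHom_ext (fun _ ↦ by simp) fun i ↦ by
      show ofTower (toTower (xbar i)) = xbar i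
      rw [toTower_xbar, ofTower_z]))

end Isomorphism

def towerBasis : Module.Basis (Fin 4 × Fin 3 × Fin 2) ℤ A₃ :=
  (adjoinRootBasis (Polynomial.monic_X_pow 4) (Polynomial.natDegree_X_pow 4)).smulTower
    ((adjoinRootBasis f₂_monic f₂_natDegree).smulTower (adjoinRootBasis f₃_monic f₃_natDegree))

lemma towerBasis_apply (i : Fin 4 × Fin 3 × Fin 2) :
    towerBasis i = z 0 ^ (i.1 : ℕ) * z 1 ^ (i.2.1 : ℕ) * z 2 ^ (i.2.2 : ℕ) := by
  simp [towerBasis, adjoinRootBasis_apply, Algebra.smul_def, z, t₁,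
    IsScalarTower.algebraMap_apply A₁ A₂ A₃]
  ring

/-- The classes of the 24 monomials `x₁^a·x₂^b·x₃^c`, `0 ≤ a ≤ 3`, `0 ≤ b ≤ 2`,
`0 ≤ c ≤ 1`, form a basis of `R` as a `ℤ`-module; in particular `R` is free of
rank `24 = |S₄|`. -/
theorem basis_monomials :
    (∃ b : Module.Basis (Fin 4 × Fin 3 × Fin 2) ℤ R,
      ∀ i : Fin 4 × Fin 3 × Fin 2,
        b i = Ideal.Quotient.mk I
          (x₁ ^ (i.1 : ℕ) * x₂ ^ (i.2.1 : ℕ) * x₃ ^ (i.2.2 : ℕ))) ∧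
    Module.Free ℤ R ∧ Module.finrank ℤ R = 24 := by
  let b := towerBasis.map towerEquiv.symm.toAddEquiv.toIntLinearEquiv
  have hb (i : Fin 4 × Fin 3 × Fin 2) :
      b i = Ideal.Quotient.mk I (x₁ ^ (i.1 : ℕ) * x₂ ^ (i.2.1 : ℕ) * x₃ ^ (i.2.2 : ℕ)) := by
    simp [b, towerBasis_apply, towerEquiv, ofTower_z, x₁, x₂, x₃]
  exact ⟨⟨b, hb⟩, .of_basis b, by simp [Module.finrank_eq_card_basis b]⟩

end

end Stmt9
end

section
/- Let P = MvPolynomial (Fin 2) ℤ with variables x₁, x₂, let I be the ideal generated by x₁² + x₂² and x₁²·x₂², and let R = P ⧸ I. Then the classes of the eight monomials x₁^a·x₂^b with 0 ≤ a ≤ 3 and 0 ≤ b ≤ 1 form a basis of R as a ℤ-module; in particular R is a free ℤ-module of rank 8 (this realizes the integral cohomology ring of the flag manifold Sp(2)/T², whose rank equals the order of the Weyl group of type B₂). -/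
namespace Stmt12

noncomputable section

/-- The polynomial ring `P = ℤ[x₁, x₂]`. -/
abbrev P := MvPolynomial (Fin 2) ℤ

def x₁ : P := MvPolynomial.X 0
def x₂ : P := MvPolynomial.X 1

/-- The ideal generated by `x₁² + x₂²` and `x₁²·x₂²`. -/
def I : Ideal P := Ideal.span {x₁ ^ 2 + x₂ ^ 2, x₁ ^ 2 * x₂ ^ 2}

/-- The quotient ring, realizing `H^*(Sp(2)/T²; ℤ)`. -/
abbrev R := P ⧸ I

/-!
Since `x₁⁴ = x₁²·(x₁² + x₂²) - x₁²·x₂²`, the ideal `I` is also generated by `x₁⁴` and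
`x₁² + x₂²`. Hence `R` is obtained from `ℤ` by adjoining first a root `u` of the monic `X⁴` and
then a root `v` of the monic `X² + u²`; the two power bases `1, u, u², u³` and `1, v` multiply to
the basis `uᵃ·vᵇ`.
-/

open Polynomial AdjoinRoot

namespace Tower

variable (k : Type*) [CommRing k]

abbrev Base := AdjoinRoot (X ^ 4 : k[X])

def relation : (Base k)[X] := X ^ 2 + C (root (X ^ 4 : k[X]) ^ 2)

lemma eval₂_relation {S : Type*} [CommRing S] (f : Base k →+* S) (x : S) :
    (relation k).eval₂ f x = x ^ 2 + f (root _) ^ 2 := by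
  simp [relation, eval₂_pow]

end Tower

abbrev Tower (k : Type*) [CommRing k] := AdjoinRoot (Tower.relation k)

namespace Tower

variable (k : Type*) [CommRing k]

def u : Tower k := algebraMap (Base k) (Tower k) (root _)

def v : Tower k := root _

variable {k} in
def lift {S : Type*} [CommRing S] [Algebra k S] (a b : S) (ha : a ^ 4 = 0) (hb : b ^ 2 + a ^ 2 = 0) :
    Tower k →ₐ[k] S :=
  liftAlgHom (relation k) (liftAlgHom (X ^ 4) (Algebra.ofId k S) a (by simp [ha])) b
    (by simpa [eval₂_relation] using hb)

section lift
variable {k} {S : Type*} [CommRing S] [Algebra k S] {a b : S} (ha : a ^ 4 = 0) (hb : b ^ 2 + a ^ 2 = 0)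

@[simp] lemma lift_u : lift a b ha hb (u k) = a := by
  simp [lift, u, AdjoinRoot.algebraMap_eq]

@[simp] lemma lift_v : lift a b ha hb (v k) = b := by
  simp [lift, v]

end lift

lemma algHom_ext {S : Type*} [CommRing S] [Algebra k S] {f g : Tower k →ₐ[k] S}
    (hu : f (u k) = g (u k)) (hv : f (v k) = g (v k)) : f = g :=
  algHom_ext' (AdjoinRoot.algHom_ext hu) hv

lemma u_pow_four : u k ^ 4 = 0 := by
  simpa [u, ← map_pow] using congrArg (algebraMap (Base k) (Tower k)) (eval₂_root (X ^ 4 : k[X]))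

lemma v_sq : v k ^ 2 = -u k ^ 2 := by
  have h := eval₂_root (relation k)
  rw [eval₂_relation, ← AdjoinRoot.algebraMap_eq] at h
  exact eq_neg_of_add_eq_zero_left h

lemma relation_monic : (relation k).Monic := monic_X_pow_add_C _ two_ne_zero

variable [Nontrivial k]

instance : Nontrivial (Base k) := Ideal.Quotient.nontrivial_iff.mpr (by simp [not_isUnit_X])

lemma natDegree_relation : (relation k).natDegree = 2 := natDegree_X_pow_add_C

def basis : Module.Basis (Fin 4 × Fin 2) k (Tower k) :=
  let pbBase := powerBasis' (monic_X_pow 4 : (X ^ 4 : k[X]).Monic)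
  let pbTop := powerBasis' (relation_monic k)
  (pbBase.basis.smulTower pbTop.basis).reindex
    ((finCongr (by simp [pbBase] : pbBase.dim = 4)).prodCongr
      (finCongr (by simpa [pbTop] using natDegree_relation k : pbTop.dim = 2)))

lemma basis_apply (i : Fin 4 × Fin 2) : basis k i = u k ^ (i.1 : ℕ) * v k ^ (i.2 : ℕ) := by
  rw [basis, Module.Basis.reindex_apply, Module.Basis.smulTower_apply]
  simp [Algebra.smul_def, u, v]

end Tower

lemma x₁_sq_add_x₂_sq_mem_I : x₁ ^ 2 + x₂ ^ 2 ∈ I := Ideal.subset_span (Set.mem_insert _ _)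

lemma x₁_sq_mul_x₂_sq_mem_I : x₁ ^ 2 * x₂ ^ 2 ∈ I :=
  Ideal.subset_span (Set.mem_insert_of_mem _ rfl)

lemma x₁_pow_four_mem_I : x₁ ^ 4 ∈ I := by
  rw [show x₁ ^ 4 = x₁ ^ 2 * (x₁ ^ 2 + x₂ ^ 2) - x₁ ^ 2 * x₂ ^ 2 by ring]
  exact sub_mem (I.mul_mem_left _ x₁_sq_add_x₂_sq_mem_I) x₁_sq_mul_x₂_sq_mem_I

def ofTower : Tower ℤ →ₐ[ℤ] R :=
  Tower.lift (Ideal.Quotient.mk I x₁) (Ideal.Quotient.mk I x₂)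
    (by rw [← map_pow, Ideal.Quotient.eq_zero_iff_mem]; exact x₁_pow_four_mem_I)
    (by rw [← map_pow, ← map_pow, ← map_add, Ideal.Quotient.eq_zero_iff_mem, add_comm]
        exact x₁_sq_add_x₂_sq_mem_I)

def evalTower : P →ₐ[ℤ] Tower ℤ := MvPolynomial.aeval ![Tower.u ℤ, Tower.v ℤ]

@[simp] lemma evalTower_x₁ : evalTower x₁ = Tower.u ℤ := by simp [evalTower, x₁]

@[simp] lemma evalTower_x₂ : evalTower x₂ = Tower.v ℤ := by simp [evalTower, x₂]

lemma I_le_ker_evalTower : I ≤ RingHom.ker evalTower := by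
  rw [I, Ideal.span_le]
  rintro p (rfl | rfl) <;> simp [Tower.v_sq, ← pow_add, Tower.u_pow_four]

def toTower : R →ₐ[ℤ] Tower ℤ := Ideal.Quotient.liftₐ I evalTower fun _ ha => I_le_ker_evalTower ha

@[simp] lemma toTower_mk (p : P) : toTower (Ideal.Quotient.mk I p) = evalTower p := rfl

def towerEquiv : Tower ℤ ≃ₐ[ℤ] R :=
  AlgEquiv.ofAlgHom ofTower toTower
    (Ideal.Quotient.algHom_ext ℤ <| MvPolynomial.algHom_ext fun i => by
      fin_cases i <;> simp [evalTower, ofTower, x₁, x₂])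
    (Tower.algHom_ext ℤ (by simp [ofTower]) (by simp [ofTower]))

/-- The classes of the eight monomials `x₁^a·x₂^b`, `0 ≤ a ≤ 3`, `0 ≤ b ≤ 1`, form a
basis of `R` as a `ℤ`-module; in particular `R` is free of rank `8`, the order of the
Weyl group of type `B₂`. -/
theorem basis_monomials :
    (∃ b : Module.Basis (Fin 4 × Fin 2) ℤ R,
      ∀ i : Fin 4 × Fin 2,
        b i = Ideal.Quotient.mk I (x₁ ^ (i.1 : ℕ) * x₂ ^ (i.2 : ℕ))) ∧
    Module.Free ℤ R ∧ Module.finrank ℤ R = 8 := by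
  let b := (Tower.basis ℤ).map towerEquiv.toLinearEquiv
  have hb : ∀ i, b i = Ideal.Quotient.mk I (x₁ ^ (i.1 : ℕ) * x₂ ^ (i.2 : ℕ)) := by
    intro i
    simp [b, Tower.basis_apply, towerEquiv, ofTower]
  refine ⟨⟨b, hb⟩, .of_basis b, ?_⟩
  rw [Module.finrank_eq_card_basis b]
  simp

end

end Stmt12
end

section
/- In the group algebra (ℤ/2ℤ)[D₆] of the dihedral group of order 12 (the Weyl group of type G₂), with s₁ = sr 0 and s₂ = sr 1, the elements c₁ = 1 + s₁₂₁₂ + s₂₁₂₁, c₂ = 1 + s₂₁₂ + s₁₂₁₂ + s₁₂₁₂₁, and c₃ = 1 + s₂₁₂ + s₂₁₂₁ + s₁₂₁₂₁ form a set of mutually orthogonal idempotents summing to 1. -/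
namespace Stmt13

noncomputable section

abbrev k := ZMod 2

/-- The group algebra `(ℤ/2ℤ)[D₆]`, where `D₆` is the dihedral group of order 12
(the Weyl group of type `G₂`). -/
abbrev A := MonoidAlgebra k (DihedralGroup 6)

/-- The reflection `s₁ = sr 0` as an element of the group algebra. -/
def s₁ : A := MonoidAlgebra.of k (DihedralGroup 6) (DihedralGroup.sr 0)

/-- The reflection `s₂ = sr 1` as an element of the group algebra. -/
def s₂ : A := MonoidAlgebra.of k (DihedralGroup 6) (DihedralGroup.sr 1)

def c₁ : A := 1 + s₁ * s₂ * s₁ * s₂ + s₂ * s₁ * s₂ * s₁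
def c₂ : A := 1 + s₂ * s₁ * s₂ + s₁ * s₂ * s₁ * s₂ + s₁ * s₂ * s₁ * s₂ * s₁
def c₃ : A := 1 + s₂ * s₁ * s₂ + s₂ * s₁ * s₂ * s₁ + s₁ * s₂ * s₁ * s₂ * s₁

private lemma z1 : (-1 : ZMod 6) = 5 := by decide
private lemma z2 : (-2 : ZMod 6) = 4 := by decide
private lemma z3 : (-3 : ZMod 6) = 3 := by decide
private lemma z4 : (-4 : ZMod 6) = 2 := by decide
private lemma z5 : (-5 : ZMod 6) = 1 := by decide
private lemma zr0 : DihedralGroup.r (0 : ZMod 6) = 1 := rfl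

private lemma addself (x : A) : x + x = 0 := by
  rw [← two_smul k x, show (2:k) = 0 by decide, zero_smul]

private lemma nsmul2 (x : A) : (2 : ℕ) • x = 0 := by rw [two_smul]; exact addself x
private lemma zsmul2 (x : A) : (2 : ℤ) • x = 0 := by rw [two_smul]; exact addself x
private lemma nsmul3 (x : A) : (3 : ℕ) • x = x := by
  rw [show (3:ℕ) = 2 + 1 by rfl, add_smul, nsmul2, one_smul, zero_add]
private lemma zsmul3 (x : A) : (3 : ℤ) • x = x := by
  rw [show (3:ℤ) = 2 + 1 by rfl, add_smul, zsmul2, one_smul, zero_add]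
private lemma nsmul4 (x : A) : (4 : ℕ) • x = 0 := by
  rw [show (4:ℕ) = 2 + 2 by rfl, add_smul, nsmul2, zero_add]
private lemma zsmul4 (x : A) : (4 : ℤ) • x = 0 := by
  rw [show (4:ℤ) = 2 + 2 by rfl, add_smul, zsmul2, zero_add]

/-- `c₁, c₂, c₃` form a set of mutually orthogonal idempotents summing to `1`
in `(ℤ/2ℤ)[D₆]`. -/
theorem mutually_orthogonal_idempotents :
    (c₁ * c₁ = c₁ ∧ c₂ * c₂ = c₂ ∧ c₃ * c₃ = c₃) ∧
    (c₁ * c₂ = 0 ∧ c₂ * c₁ = 0 ∧ c₁ * c₃ = 0 ∧ c₃ * c₁ = 0 ∧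
      c₂ * c₃ = 0 ∧ c₃ * c₂ = 0) ∧
    c₁ + c₂ + c₃ = 1 := by
  refine ⟨⟨?_, ?_, ?_⟩, ⟨?_, ?_, ?_, ?_, ?_, ?_⟩, ?_⟩ <;>
  · simp only [c₁, c₂, c₃, s₁, s₂, MonoidAlgebra.of_apply, MonoidAlgebra.one_def, mul_add,
      add_mul, MonoidAlgebra.single_mul_single, one_mul, mul_one, DihedralGroup.sr_mul_sr,
      DihedralGroup.r_mul_sr, DihedralGroup.sr_mul_r, DihedralGroup.r_mul_r]
    norm_num
    simp only [z1, z2, z3, z4, z5, zr0]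
    abel_nf
    simp only [nsmul2, zsmul2, nsmul3, zsmul3, nsmul4, zsmul4, addself, add_zero, zero_add]

end

end Stmt13
end
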